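/- arXiv:2206.00333 — 3 statements merged into one kernel-verified Lean document; each statement's English description precedes it below -/
import Mathlib

section
/- Let X be a shift space and N ≥ 0, and suppose E_X(v) is acyclic for all v ∈ L(X) of length < N. Then the following are equivalent: (1) E_X(v) is connected for all v ∈ L(X) with |v| < N; (2) G^L_n(X) is connected for all n ≤ N; (3) G^L_N(X) is connected. -/
/-!
(3) ⇒ (2): dropping the last letter of a colour maps `G_{n+1}` onto `G_n`.
(1) ⇒ (2), by induction on `n`: two left extensions of `w` are joined by a path in the connected
graph `E(w)`, and consecutive left vertices on it share a right extension `d`, hence are joined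
by an edge of colour `w d` in `G_{n+1}`.
(2) ⇒ (1): acyclicity of the graphs `E(v)`, `|v| < N`, makes each `G_n`, `n ≤ N`, acyclic for its
colouring (induction on `n`). Then a path of `G_{|w|+1}` between left extensions of `w` can be
cut down to one using only the colours `w d`, which is a path of `E(w)`.
-/

def shiftMap {A : Type*} (x : ℤ → A) : ℤ → A := fun n => x (n + 1)

/-- `u` occurs as a factor of the bi-infinite word `x`. -/
def FactorOf {A : Type*} (u : List A) (x : ℤ → A) : Prop :=
  ∃ i : ℤ, ∀ k : Fin u.length, x (i + ((k : ℕ) : ℤ)) = u.get k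

/-- The language of a set of bi-infinite words. -/
def lang {A : Type*} (X : Set (ℤ → A)) : Set (List A) := {u | ∃ x ∈ X, FactorOf u x}

/-- A (nonempty) shift space: a nonempty, closed, shift-invariant subset of `A^ℤ`. -/
def IsShiftSpace {A : Type*} [TopologicalSpace A] (X : Set (ℤ → A)) : Prop :=
  X.Nonempty ∧ IsClosed X ∧ shiftMap '' X = X

/-- The extension graph of the word `v` with respect to the factorial language `L`:
the bipartite graph on the left extensions and the right extensions of `v`, with an
edge between `a` (left) and `b` (right) whenever `a v b ∈ L`. -/
def extGraph {A : Type*} (L : Set (List A)) (v : List A) :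
    SimpleGraph ({a : A // a :: v ∈ L} ⊕ {b : A // v ++ [b] ∈ L}) :=
  SimpleGraph.fromRel (fun p q =>
    match p, q with
    | Sum.inl a, Sum.inr b => (a.1 :: (v ++ [b.1])) ∈ L
    | _, _ => False)

/-- In the edge-colored multigraph determined by the cliques `{v | M ℓ v}` (one clique of
color `ℓ` for each label `ℓ`), there is an edge of color `ℓ` between `x` and `y`. -/
def MEdge {Λ V : Type*} (M : Λ → V → Prop) (ℓ : Λ) (x y : V) : Prop :=
  x ≠ y ∧ M ℓ x ∧ M ℓ y

/-- A simple cycle of length `n + 2` in the colored multigraph determined by `M`: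
pairwise distinct vertices `v i`, consecutive vertices joined by an edge of color `ℓ i`,
and the (undirected, colored) edges pairwise distinct. -/
def IsCycleM {Λ V : Type*} (M : Λ → V → Prop) (n : ℕ) (v : Fin (n + 2) → V)
    (ℓ : Fin (n + 2) → Λ) : Prop :=
  Function.Injective v ∧ (∀ i, MEdge M (ℓ i) (v i) (v (i + 1))) ∧
    ∀ i j, i ≠ j → ¬(ℓ i = ℓ j ∧ ({v i, v (i + 1)} : Set V) = {v j, v (j + 1)})

/-- The colored multigraph determined by `M` is acyclic for the coloring: every simple
cycle only uses edges of a single color. -/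
def AcyclicForColoring {Λ V : Type*} (M : Λ → V → Prop) : Prop :=
  ∀ n v ℓ, IsCycleM M n v ℓ → ∀ i j, ℓ i = ℓ j

/-- The colored multigraph determined by `M` is connected (on the whole vertex set `V`). -/
def MConnected {Λ V : Type*} (M : Λ → V → Prop) : Prop :=
  ∀ x y : V, Relation.ReflTransGen (fun p q => ∃ ℓ, MEdge M ℓ p q) x y

/-- Membership predicate describing the colored multigraph `G^L_n(X)`: the label `w`
contributes the clique `E^L_X(w)` on the vertex set `A`, for each `w` of length `n`
in the language of `X`. -/
def GLmem {A : Type*} (X : Set (ℤ → A)) (n : ℕ) (w : List A) (a : A) : Prop :=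
  w.length = n ∧ w ∈ lang X ∧ (a :: w) ∈ lang X

open Relation SimpleGraph

section Colored

variable {Λ Λ' V : Type*}

theorem reflTransGen_of_mem_of_mem {M : Λ → V → Prop} {ℓ : Λ} {x y : V} (hx : M ℓ x)
    (hy : M ℓ y) : ReflTransGen (fun p q => ∃ ℓ, MEdge M ℓ p q) x y := by
  rcases eq_or_ne x y with rfl | hne
  · exact .refl
  · exact .single ⟨ℓ, hne, hx, hy⟩

theorem MConnected.of_map {M : Λ → V → Prop} {M' : Λ' → V → Prop} (f : Λ' → Λ)
    (hf : ∀ ℓ a, M' ℓ a → M (f ℓ) a) (h : MConnected M') : MConnected M := fun x y =>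
  ReflTransGen.mono (fun _ _ ⟨ℓ, hne, hp, hq⟩ => ⟨f ℓ, hne, hf ℓ _ hp, hf ℓ _ hq⟩) _ _ (h x y)

/-- The path form of acyclicity for the colouring (`AcyclicForColoring`). -/
def ColorSeparated (M : Λ → V → Prop) : Prop :=
  ∀ ℓ x y, M ℓ x → M ℓ y → ReflTransGen (fun p q => ∃ ℓ', ℓ' ≠ ℓ ∧ M ℓ' p ∧ M ℓ' q) x y → x = y

end Colored

theorem Relation.ReflTransGen.of_separated {V : Type*} {R S T : V → V → Prop} {C : Set V}
    (hR : ∀ y y', R y y' → S y y' ∨ T y y') (hT : ∀ y y', T y y' → y ∈ C ∧ y' ∈ C)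
    (hS : ∀ y y', y ∈ C → y' ∈ C → ReflTransGen S y y' → y = y')
    {x z : V} (h : ReflTransGen R x z) (hx : x ∈ C) (hz : z ∈ C) : ReflTransGen T x z := by
  have key : ∀ {c}, ReflTransGen R x c → ∃ y ∈ C, ReflTransGen T x y ∧ ReflTransGen S y c := by
    intro c hc
    induction hc with
    | refl => exact ⟨x, hx, .refl, .refl⟩
    | tail _ hstep ih =>
      obtain ⟨y, hy, hxy, hyc⟩ := ih
      rcases hR _ _ hstep with hS' | hT'
      · exact ⟨y, hy, hxy, hyc.tail hS'⟩
      · obtain rfl := hS _ _ hy (hT _ _ hT').1 hyc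
        exact ⟨_, (hT _ _ hT').2, hxy.tail hT', .refl⟩
  obtain ⟨y, hy, hxy, hyz⟩ := key h
  rwa [hS _ _ hy hz hyz] at hxy

theorem SimpleGraph.IsAcyclic.eq_of_adj_of_walk {V : Type*} {G : SimpleGraph V} (hG : G.IsAcyclic)
    {q x y : V} (hx : G.Adj x q) (hy : G.Adj y q) (p : G.Walk x y) (hq : q ∉ p.support) :
    x = y := by
  classical
  by_contra hne
  have hpath : (Walk.cons hx (Walk.cons hy.symm Walk.nil)).IsPath := by
    simp [Walk.isPath_def, hx.ne, hne, hy.ne']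
  have := (hG.subsingleton_path x y).elim p.toPath ⟨_, hpath⟩
  exact hq (p.support_toPath_subset_support (this ▸ by simp))

section Language

variable {A : Type*} {X : Set (ℤ → A)}

theorem lang_of_infix {u v : List A} (huv : u <:+: v) (hv : v ∈ lang X) : u ∈ lang X := by
  obtain ⟨s, t, rfl⟩ := huv
  obtain ⟨x, hx, i, hi⟩ := hv
  refine ⟨x, hx, i + s.length, fun k => ?_⟩
  have := hi ⟨s.length + k, by simp; omega⟩
  simp only [List.get_eq_getElem, List.append_assoc] at this ⊢
  rw [List.getElem_append_right (by simp), List.getElem_append_left (by simp)] at this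
  simpa [add_assoc] using this

theorem lang_of_cons {a : A} {u : List A} (h : a :: u ∈ lang X) : u ∈ lang X :=
  lang_of_infix (List.infix_cons (List.infix_refl u)) h

theorem lang_of_cons_append {a d : A} {w : List A} (h : a :: (w ++ [d]) ∈ lang X) :
    a :: w ∈ lang X :=
  lang_of_infix (List.prefix_append (a :: w) [d]).isInfix h

theorem exists_cons_mem_lang {u : List A} (h : u ∈ lang X) : ∃ a, a :: u ∈ lang X := by
  obtain ⟨x, hx, i, h⟩ := h
  refine ⟨x (i - 1), x, hx, i - 1, fun ⟨k, hk⟩ => ?_⟩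
  cases k with
  | zero => simp
  | succ j =>
    have := h ⟨j, by simpa using hk⟩
    simp only [List.get_eq_getElem] at this ⊢
    rw [show i - 1 + ((j + 1 : ℕ) : ℤ) = i + (j : ℕ) by push_cast; ring]
    simpa using this

theorem GLmem.of_append_singleton {n : ℕ} {w : List A} {d a : A}
    (h : GLmem X (n + 1) (w ++ [d]) a) : GLmem X n w a :=
  ⟨by simpa using h.1, lang_of_infix (List.prefix_append w [d]).isInfix h.2.1,
    lang_of_cons_append h.2.2⟩

theorem GLmem.exists_eq_append_singleton {n : ℕ} {ℓ : List A} {a : A}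
    (h : GLmem X (n + 1) ℓ a) : ∃ w d, ℓ = w ++ [d] := by
  rcases List.eq_nil_or_concat' ℓ with rfl | hℓ
  · simp [GLmem] at h
  · exact hℓ

theorem MConnected.GLmem_of_le {n N : ℕ} (hnN : n ≤ N) (h : MConnected (GLmem X N)) :
    MConnected (GLmem X n) := by
  induction N, hnN using Nat.le_induction with
  | base => exact h
  | succ N _ ih =>
    refine ih (h.of_map List.dropLast fun ℓ a ha => ?_)
    obtain ⟨w, d, rfl⟩ := ha.exists_eq_append_singleton
    simpa using ha.of_append_singleton

theorem extGraph_adj_inl_inr {L : Set (List A)} {v : List A} {a b : A} (ha : a :: v ∈ L)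
    (hb : v ++ [b] ∈ L) :
    (extGraph L v).Adj (.inl ⟨a, ha⟩) (.inr ⟨b, hb⟩) ↔ a :: (v ++ [b]) ∈ L := by
  simp [extGraph]

def SharedRightExt (X : Set (ℤ → A)) (w : List A) (P : A → Prop) (y y' : A) : Prop :=
  ∃ d, P d ∧ y :: (w ++ [d]) ∈ lang X ∧ y' :: (w ++ [d]) ∈ lang X

theorem exists_extGraph_walk {w : List A} {P : A → Prop} {a b : A} (ha : a :: w ∈ lang X)
    (h : ReflTransGen (SharedRightExt X w P) a b) :
    ∃ (hb : b :: w ∈ lang X) (p : (extGraph (lang X) w).Walk (.inl ⟨a, ha⟩) (.inl ⟨b, hb⟩)),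
      ∀ d (hd : w ++ [d] ∈ lang X), .inr ⟨d, hd⟩ ∈ p.support → P d := by
  induction h with
  | refl => exact ⟨ha, .nil, by simp⟩
  | tail _ hstep ih =>
    obtain ⟨hy, p, hp⟩ := ih
    obtain ⟨d, hd, hyd, hy'd⟩ := hstep
    have hwd := lang_of_cons hyd
    have hy' := lang_of_cons_append hy'd
    refine ⟨hy', (p.concat ((extGraph_adj_inl_inr hy hwd).2 hyd)).concat
      ((extGraph_adj_inl_inr hy' hwd).2 hy'd).symm, fun d' hd' hmem => ?_⟩
    simp only [Walk.support_concat, List.mem_append, List.mem_singleton] at hmem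
    rcases hmem with (hmem | hmem) | hmem
    · exact hp d' hd' hmem
    · cases hmem
      exact hd
    · cases hmem

theorem reflTransGen_GLmem_of_extGraph_reachable {w : List A} {a b : A} {ha : a :: w ∈ lang X}
    {hb : b :: w ∈ lang X} (h : (extGraph (lang X) w).Reachable (.inl ⟨a, ha⟩) (.inl ⟨b, hb⟩)) :
    ReflTransGen (fun p q => ∃ ℓ, MEdge (GLmem X (w.length + 1)) ℓ p q) a b := by
  have hshare : ∀ c c' d, c :: (w ++ [d]) ∈ lang X → c' :: (w ++ [d]) ∈ lang X →
      ReflTransGen (fun p q => ∃ ℓ, MEdge (GLmem X (w.length + 1)) ℓ p q) c c' :=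
    fun c c' d hc hc' => reflTransGen_of_mem_of_mem (ℓ := w ++ [d])
      ⟨by simp, lang_of_cons hc, hc⟩ ⟨by simp, lang_of_cons hc', hc'⟩
  -- Sending each right extension `d` to some left extension of `w d` turns every edge of `E(w)`
  -- into an edge or a loop of `G_{|w|+1}`.
  let f : {c // c :: w ∈ lang X} ⊕ {d // w ++ [d] ∈ lang X} → A :=
    Sum.elim Subtype.val fun d => (exists_cons_mem_lang d.2).choose
  refine ReflTransGen.lift' f ?_ _ _ ((reachable_iff_reflTransGen _ _).1 h)
  rintro (⟨c, hc⟩ | ⟨d, hd⟩) (⟨c', hc'⟩ | ⟨d', hd'⟩) hadj <;> simp [extGraph] at hadj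
  · exact hshare c _ d' hadj (exists_cons_mem_lang hd').choose_spec
  · exact hshare _ c' d (exists_cons_mem_lang hd).choose_spec hadj

/-- An edge of colour `w' d` of `G_{n+1}` is an edge of colour `w'` of `G_n`, so separation of
`G_n` leaves only the colours `w d`: two-step paths through `d` in `E(w)`. -/
theorem reflTransGen_sharedRightExt {n : ℕ} (hsep : ColorSeparated (GLmem X n)) {w : List A}
    (hw : w.length = n) {P : A → Prop} {a b : A} (ha : a :: w ∈ lang X) (hb : b :: w ∈ lang X)
    (h : ReflTransGen (fun y y' => ∃ ℓ, (∀ d, ℓ = w ++ [d] → P d) ∧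
      GLmem X (n + 1) ℓ y ∧ GLmem X (n + 1) ℓ y') a b) :
    ReflTransGen (SharedRightExt X w P) a b := by
  refine h.of_separated (C := {y | y :: w ∈ lang X})
    (S := fun y y' => ∃ w', w' ≠ w ∧ GLmem X n w' y ∧ GLmem X n w' y') ?_ ?_ ?_ ha hb
  · rintro y y' ⟨ℓ, hP, hy, hy'⟩
    obtain ⟨w', d, rfl⟩ := hy.exists_eq_append_singleton
    by_cases hw' : w' = w
    · subst hw'
      exact .inr ⟨d, hP d rfl, hy.2.2, hy'.2.2⟩
    · exact .inl ⟨w', hw', hy.of_append_singleton, hy'.of_append_singleton⟩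
  · rintro y y' ⟨d, -, hy, hy'⟩
    exact ⟨lang_of_cons_append hy, lang_of_cons_append hy'⟩
  · intro y y' hy hy' hS
    exact hsep w y y' ⟨hw, lang_of_cons hy, hy⟩ ⟨hw, lang_of_cons hy', hy'⟩ hS

theorem colorSeparated_GLmem_zero : ColorSeparated (GLmem X 0) := by
  intro ℓ x y hx _ h
  rcases h.cases_tail with rfl | ⟨z, -, ℓ', hne, hz, -⟩
  · rfl
  · exact absurd (by rw [List.length_eq_zero_iff.1 hz.1, List.length_eq_zero_iff.1 hx.1]) hne

theorem ColorSeparated.GLmem_succ {n : ℕ} (hsep : ColorSeparated (GLmem X n))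
    (hacyc : ∀ w ∈ lang X, w.length = n → (extGraph (lang X) w).IsAcyclic) :
    ColorSeparated (GLmem X (n + 1)) := by
  intro ℓ x y hx hy h
  obtain ⟨w, e, rfl⟩ := hx.exists_eq_append_singleton
  obtain ⟨hw, hwL, hxw⟩ := hx.of_append_singleton
  have hwe : w ++ [e] ∈ lang X := hx.2.1
  have hT := reflTransGen_sharedRightExt hsep hw (P := (· ≠ e)) hxw
    (lang_of_cons_append hy.2.2) (ReflTransGen.mono (fun _ _ ⟨ℓ', hne, hp, hq⟩ =>
      ⟨ℓ', fun d hd hde => hne (by rw [hd, hde]), hp, hq⟩) _ _ h)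
  obtain ⟨hyw, p, hp⟩ := exists_extGraph_walk hxw hT
  simpa using (hacyc w hwL hw).eq_of_adj_of_walk ((extGraph_adj_inl_inr hxw hwe).2 hx.2.2)
    ((extGraph_adj_inl_inr hyw hwe).2 hy.2.2) p fun hmem => hp e hwe hmem rfl

theorem colorSeparated_GLmem {N : ℕ}
    (hacyc : ∀ v ∈ lang X, v.length < N → (extGraph (lang X) v).IsAcyclic) {n : ℕ}
    (hn : n ≤ N) : ColorSeparated (GLmem X n) := by
  induction n with
  | zero => exact colorSeparated_GLmem_zero
  | succ n ih => exact (ih (by omega)).GLmem_succ fun w hw hlen => hacyc w hw (by omega)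

theorem extGraph_connected {w : List A} (hw : w ∈ lang X)
    (hsep : ColorSeparated (GLmem X w.length)) (hconn : MConnected (GLmem X (w.length + 1))) :
    (extGraph (lang X) w).Connected := by
  have hleft : ∀ a b (ha : a :: w ∈ lang X) (hb : b :: w ∈ lang X),
      (extGraph (lang X) w).Reachable (.inl ⟨a, ha⟩) (.inl ⟨b, hb⟩) := by
    intro a b ha hb
    have hT := reflTransGen_sharedRightExt hsep rfl (P := fun _ => True) ha hb
      (ReflTransGen.mono (fun _ _ ⟨ℓ, _, hp, hq⟩ => ⟨ℓ, fun _ _ => trivial, hp, hq⟩) _ _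
        (hconn a b))
    obtain ⟨_, p, -⟩ := exists_extGraph_walk ha hT
    exact ⟨p⟩
  have hreach : ∀ z, ∃ a ha, (extGraph (lang X) w).Reachable (.inl ⟨a, ha⟩) z := by
    rintro (⟨a, ha⟩ | ⟨d, hd⟩)
    · exact ⟨a, ha, .refl _⟩
    · obtain ⟨a, had⟩ := exists_cons_mem_lang hd
      exact ⟨a, lang_of_cons_append had, ((extGraph_adj_inl_inr _ hd).2 had).reachable⟩
  obtain ⟨a, ha⟩ := exists_cons_mem_lang hw
  have : Nonempty ({a // a :: w ∈ lang X} ⊕ {b // w ++ [b] ∈ lang X}) := ⟨.inl ⟨a, ha⟩⟩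
  refine ⟨fun z z' => ?_⟩
  obtain ⟨a, ha, hz⟩ := hreach z
  obtain ⟨b, hb, hz'⟩ := hreach z'
  exact hz.symm.trans ((hleft a b ha hb).trans hz')

theorem MConnected.GLmem_succ {n : ℕ} (hn : MConnected (GLmem X n))
    (hE : ∀ w ∈ lang X, w.length = n → (extGraph (lang X) w).Connected) :
    MConnected (GLmem X (n + 1)) := fun a b => by
  refine ReflTransGen.lift' id (fun y y' ⟨w, _, ⟨hw, hwL, hy⟩, ⟨_, _, hy'⟩⟩ => ?_) _ _ (hn a b)
  subst hw
  exact reflTransGen_GLmem_of_extGraph_reachable ((hE w hwL rfl).preconnected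
    (.inl ⟨y, hy⟩) (.inl ⟨y', hy'⟩))

theorem mConnected_GLmem (hover : ∀ a : A, [a] ∈ lang X) {n : ℕ}
    (hE : ∀ v ∈ lang X, v.length < n → (extGraph (lang X) v).Connected) :
    MConnected (GLmem X n) := by
  induction n with
  | zero =>
    exact fun a b => reflTransGen_of_mem_of_mem (ℓ := [])
      ⟨rfl, lang_of_cons (hover a), hover a⟩ ⟨rfl, lang_of_cons (hover b), hover b⟩
  | succ n ih =>
    exact (ih fun v hv hlt => hE v hv (by omega)).GLmem_succ fun w hw hlen => hE w hw (by omega)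

end Language

theorem stmt_13_general {A : Type*}
    (X : Set (ℤ → A)) (hover : ∀ a : A, [a] ∈ lang X) (N : ℕ)
    (hacyc : ∀ v ∈ lang X, v.length < N → (extGraph (lang X) v).IsAcyclic) :
    ((∀ v ∈ lang X, v.length < N → (extGraph (lang X) v).Connected)
        ↔ ∀ n ≤ N, MConnected (GLmem X n))
      ∧ ((∀ n ≤ N, MConnected (GLmem X n)) ↔ MConnected (GLmem X N)) :=
  ⟨⟨fun h1 _ hn => mConnected_GLmem hover fun v hv hlt => h1 v hv (by omega),
      fun h2 v hv hlt => extGraph_connected hv (colorSeparated_GLmem hacyc hlt.le) (h2 _ hlt)⟩,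
    ⟨fun h2 => h2 N le_rfl, fun h3 _ hn => h3.GLmem_of_le hn⟩⟩

/-- If the extension graph `E_X(v)` is acyclic for every factor `v` of length `< N`,
then the following are equivalent: (1) `E_X(v)` is connected for every `v ∈ L(X)` with
`|v| < N`; (2) `G^L_n(X)` is connected for every `n ≤ N`; (3) `G^L_N(X)` is connected. -/
theorem stmt_13 {A : Type*} [TopologicalSpace A] [DiscreteTopology A]
    (X : Set (ℤ → A)) (hX : IsShiftSpace X) (hover : ∀ a : A, [a] ∈ lang X) (N : ℕ)
    (hacyc : ∀ v ∈ lang X, v.length < N → (extGraph (lang X) v).IsAcyclic) :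
    ((∀ v ∈ lang X, v.length < N → (extGraph (lang X) v).Connected)
        ↔ ∀ n ≤ N, MConnected (GLmem X n))
      ∧ ((∀ n ≤ N, MConnected (GLmem X n)) ↔ MConnected (GLmem X N)) :=
  stmt_13_general X hover N hacyc
end

section
/- Let X be a minimal dendric shift over A that is planar for total orders (≤^L, ≤^R). Then for every two letters a, b consecutive for ≤^L and for every n ∈ ℕ, there is a unique left special factor w of length n such that {a, b} ⊆ E^L_X(w). -/
/-- A minimal shift space: a shift space whose only closed shift-invariant subsets
are `∅` and itself. -/
def IsMinimal {A : Type*} [TopologicalSpace A] (X : Set (ℤ → A)) : Prop :=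
  IsShiftSpace X ∧ ∀ Y : Set (ℤ → A), Y ⊆ X → IsClosed Y → shiftMap '' Y = Y → Y = ∅ ∨ Y = X

/-- The word `v` is planar for the pair of orders `(rL, rR)` with respect to the
language `L`: for all bi-extensions `(a₁, b₁)` and `(a₂, b₂)` of `v`, if `a₁ <L a₂`
then `b₁ ≤R b₂`. -/
def PlanarWord {A : Type*} (L : Set (List A)) (rL rR : A → A → Prop)
    (v : List A) : Prop :=
  ∀ a₁ b₁ a₂ b₂ : A, (a₁ :: (v ++ [b₁])) ∈ L → (a₂ :: (v ++ [b₂])) ∈ L →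
    rL a₁ a₂ → a₁ ≠ a₂ → rR b₁ b₂

/-- `a` and `b` are consecutive for the (total) order `r`. -/
def Consecutive {A : Type*} (r : A → A → Prop) (a b : A) : Prop :=
  r a b ∧ a ≠ b ∧ ∀ c : A, r a c → r c b → c = a ∨ c = b

/-!
Induction on `n`. If `w` is the factor for length `n`, connectedness of the extension graph of
`w` gives an edge leaving the set made of the left extensions `≤L a` and their right neighbours:
a right extension `d` of `w` adjacent both to some `a₀ ≤L a` and to some `a' ≥L b`. Planarity
squeezes every right extension of `a w` and of `b w` onto `d`, so `w d` is the required factor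
of length `n + 1`. It is the only one: `w` is forced by the induction hypothesis, and two common
right extensions `c, c'` of `a w` and `b w` satisfy `c ≤R c'` and `c' ≤R c` by planarity.
-/

section Language

variable {A : Type*} {X : Set (ℤ → A)} {a c : A} {u : List A}

lemma FactorOf.of_cons {x : ℤ → A} (h : FactorOf (a :: u) x) : FactorOf u x := by
  obtain ⟨i, hi⟩ := h
  refine ⟨i + 1, fun k => ?_⟩
  have hk := hi ⟨k + 1, by simp⟩
  simp only [List.get_eq_getElem, List.getElem_cons_succ] at hk ⊢
  rw [← hk]
  push_cast
  ring_nf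

lemma FactorOf.of_append_singleton {x : ℤ → A} (h : FactorOf (u ++ [c]) x) : FactorOf u x := by
  obtain ⟨i, hi⟩ := h
  refine ⟨i, fun k => ?_⟩
  simpa [List.getElem_append_left k.2] using hi ⟨k, by simp [Nat.lt_succ_of_lt k.2]⟩

lemma mem_lang_of_cons_mem (h : a :: u ∈ lang X) : u ∈ lang X :=
  let ⟨x, hx, hf⟩ := h
  ⟨x, hx, hf.of_cons⟩

lemma mem_lang_of_append_singleton_mem (h : u ++ [c] ∈ lang X) : u ∈ lang X :=
  let ⟨x, hx, hf⟩ := h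
  ⟨x, hx, hf.of_append_singleton⟩

lemma exists_append_singleton_mem_lang (h : u ∈ lang X) : ∃ c, u ++ [c] ∈ lang X := by
  obtain ⟨x, hx, i, hi⟩ := h
  refine ⟨x (i + u.length), x, hx, i, fun k => ?_⟩
  rcases Nat.lt_or_ge k u.length with hk | hk
  · simpa [List.getElem_append_left hk] using hi ⟨k, hk⟩
  · have hk' : (k : ℕ) = u.length := by have := k.2; simp at this; omega
    simp [hk']

end Language

lemma Consecutive.rel_of_not_rel {A : Type*} {r : A → A → Prop} [Std.Total r] {a b c : A}
    (h : Consecutive r a b) (hc : ¬ r c a) : r b c := by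
  rcases total_of r c b with hcb | hbc
  · rcases h.2.2 c ((total_of r a c).resolve_right hc) hcb with rfl | rfl
    · exact absurd (refl_of r c) hc
    · exact hcb
  · exact hbc

namespace PlanarWord

variable {A : Type*} {L : Set (List A)} {rL rR : A → A → Prop} [Std.Antisymm rR] {w : List A}

lemma mem_of_between (hpl : PlanarWord L rL rR w) {a₁ a₂ a₃ d e : A}
    (h₁₂ : rL a₁ a₂) (h₂₃ : rL a₂ a₃) (h₁ : a₁ :: (w ++ [d]) ∈ L) (h₃ : a₃ :: (w ++ [d]) ∈ L)
    (h₂ : a₂ :: (w ++ [e]) ∈ L) : a₂ :: (w ++ [d]) ∈ L := by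
  by_cases h₁₂' : a₁ = a₂
  · exact h₁₂' ▸ h₁
  by_cases h₂₃' : a₂ = a₃
  · exact h₂₃' ▸ h₃
  obtain rfl : d = e := antisymm (hpl _ _ _ _ h₁ h₂ h₁₂ h₁₂') (hpl _ _ _ _ h₂ h₃ h₂₃ h₂₃')
  exact h₂

lemma eq_of_common_right_ext (hpl : PlanarWord L rL rR w) {a b c d : A} (hab : rL a b)
    (hne : a ≠ b) (hac : a :: (w ++ [c]) ∈ L) (hbc : b :: (w ++ [c]) ∈ L)
    (had : a :: (w ++ [d]) ∈ L) (hbd : b :: (w ++ [d]) ∈ L) : c = d :=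
  antisymm (hpl _ _ _ _ hac hbd hab hne) (hpl _ _ _ _ had hbc hab hne)

end PlanarWord

theorem exists_common_right_ext {A : Type*} {rL rR : A → A → Prop} [IsLinearOrder A rL]
    [Std.Antisymm rR] {X : Set (ℤ → A)} {w : List A} {a b : A}
    (hconn : (extGraph (lang X) w).Connected) (hpl : PlanarWord (lang X) rL rR w)
    (hab : Consecutive rL a b) (ha : a :: w ∈ lang X) (hb : b :: w ∈ lang X) :
    ∃ c, a :: (w ++ [c]) ∈ lang X ∧ b :: (w ++ [c]) ∈ lang X := by
  let S : Set ({a' : A // a' :: w ∈ lang X} ⊕ {d : A // w ++ [d] ∈ lang X}) :=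
    {x | Sum.elim (fun a' => rL a'.1 a) (fun d => ∃ a₀, rL a₀ a ∧ a₀ :: (w ++ [d.1]) ∈ lang X) x}
  have hbS : Sum.inl ⟨b, hb⟩ ∉ S := fun hba => hab.2.1 (antisymm hab.1 hba)
  obtain ⟨p⟩ := hconn.preconnected (Sum.inl ⟨a, ha⟩) (Sum.inl ⟨b, hb⟩)
  obtain ⟨⟨⟨x, y⟩, hxy⟩, -, hx, hy⟩ := p.exists_boundary_dart S (refl_of rL a) hbS
  rw [extGraph, SimpleGraph.fromRel_adj] at hxy
  rcases x with a₀ | d <;> rcases y with a' | d'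
  · simp at hxy
  · exact absurd ⟨a₀, hx, hxy.2.resolve_right id⟩ hy
  · obtain ⟨a₀, ha₀, hd⟩ := hx
    have hba' := hab.rel_of_not_rel hy
    have ha'd : a'.1 :: (w ++ [d.1]) ∈ lang X := hxy.2.resolve_left id
    obtain ⟨e, he⟩ := exists_append_singleton_mem_lang ha
    obtain ⟨f, hf⟩ := exists_append_singleton_mem_lang hb
    exact ⟨d, hpl.mem_of_between ha₀ (trans_of rL hab.1 hba') hd ha'd (by simpa using he),
      hpl.mem_of_between (trans_of rL ha₀ hab.1) hba' hd ha'd (by simpa using hf)⟩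
  · simp at hxy

theorem stmt_16_general {A : Type*}
    (rL rR : A → A → Prop) (hrL : IsLinearOrder A rL) (hrR : IsLinearOrder A rR)
    (X : Set (ℤ → A)) (hover : ∀ a : A, [a] ∈ lang X)
    (hdendric : ∀ v ∈ lang X, (extGraph (lang X) v).IsTree)
    (hplanar : ∀ v ∈ lang X, PlanarWord (lang X) rL rR v) :
    ∀ a b : A, Consecutive rL a b → ∀ n : ℕ,
      ∃! w : List A, w ∈ lang X ∧ w.length = n ∧ a :: w ∈ lang X ∧ b :: w ∈ lang X := by
  intro a b hab n
  induction n with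
  | zero =>
    exact ⟨[], ⟨mem_lang_of_cons_mem (hover a), rfl, hover a, hover b⟩,
      fun w ⟨_, hw, _⟩ => List.length_eq_zero_iff.mp hw⟩
  | succ n ih =>
    obtain ⟨u, ⟨hu, rfl, hau, hbu⟩, huniq⟩ := ih
    obtain ⟨c, hac, hbc⟩ :=
      exists_common_right_ext (hdendric u hu).connected (hplanar u hu) hab hau hbu
    refine ⟨u ++ [c], ⟨mem_lang_of_cons_mem hac, by simp, hac, hbc⟩, ?_⟩
    rintro w ⟨-, hlen, haw, hbw⟩
    obtain ⟨v, d, rfl⟩ := (List.eq_nil_or_concat' w).resolve_left (by rintro rfl; simp at hlen)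
    have hav : a :: v ∈ lang X := mem_lang_of_append_singleton_mem (by simpa using haw)
    have hbv : b :: v ∈ lang X := mem_lang_of_append_singleton_mem (by simpa using hbw)
    obtain rfl : v = u := huniq v ⟨mem_lang_of_cons_mem hav, by simpa using hlen, hav, hbv⟩
    rw [(hplanar v hu).eq_of_common_right_ext hab.1 hab.2.1 haw hbw hac hbc]

/-- Let `X` be a minimal dendric shift over `A` that is planar for `(≤L, ≤R)`. Then for
any two letters `a, b` consecutive for `≤L` and every `n`, there is a unique left
special factor `w` of length `n` with `{a, b} ⊆ E^L_X(w)`. -/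
theorem stmt_16 {A : Type*} [Fintype A] [TopologicalSpace A] [DiscreteTopology A]
    (rL rR : A → A → Prop) (hrL : IsLinearOrder A rL) (hrR : IsLinearOrder A rR)
    (X : Set (ℤ → A)) (hmin : IsMinimal X) (hover : ∀ a : A, [a] ∈ lang X)
    (hdendric : ∀ v ∈ lang X, (extGraph (lang X) v).IsTree)
    (hplanar : ∀ v ∈ lang X, PlanarWord (lang X) rL rR v) :
    ∀ a b : A, Consecutive rL a b → ∀ n : ℕ,
      ∃! w : List A, w ∈ lang X ∧ w.length = n ∧ a :: w ∈ lang X ∧ b :: w ∈ lang X :=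
  stmt_16_general rL rR hrL hrR X hover hdendric hplanar
end

section
/- Let X be a shift space and σ a return morphism that is planar preserving from (⪯^L, ⪯^R) to (≤^L, ≤^R). Then a word v ∈ L(X) is planar for (⪯^L, ⪯^R) if and only if every extended image of v under σ is planar for (≤^L, ≤^R). -/
noncomputable def occCount {B : Type*} (u w : List B) : ℕ :=
  {i : ℕ | i ≤ w.length ∧ u <+: w.drop i}.ncard

/-- `σ` is a return morphism for the nonempty word `w`: it is injective (as a morphism on
words) and for every letter `a`, the word `σ(a)w` contains exactly two occurrences of `w`,
one as a proper prefix and one as a proper suffix. -/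
def IsReturnMorphism {A B : Type*} (σ : A → List B) (w : List B) : Prop :=
  w ≠ [] ∧ Function.Injective (fun v : List A => (v.map σ).flatten) ∧
    ∀ a : A, σ a ≠ [] ∧ w <+: σ a ++ w ∧ occCount w (σ a ++ w) = 2

/-- The language of the image shift `σ · X`: the factors of the images under `σ`
of the words of the language of `X`. -/
def imageLang {A B : Type*} (σ : A → List B) (X : Set (ℤ → A)) : Set (List B) :=
  {u | ∃ v ∈ lang X, u <:+: (v.map σ).flatten}

/-- `s` is the longest common suffix of `u` and `v`. -/
def IsLongestCommonSuffix {B : Type*} (s u v : List B) : Prop :=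
  s <:+ u ∧ s <:+ v ∧ ∀ t : List B, t <:+ u → t <:+ v → t.length ≤ s.length

/-- `s ∈ T^L(σ)`: `s` is the longest common suffix of `σ(a)` and `σ(b)` for some pair
of distinct letters `a ≠ b`. -/
def memTL {A B : Type*} (σ : A → List B) (s : List B) : Prop :=
  ∃ a b : A, a ≠ b ∧ IsLongestCommonSuffix s (σ a) (σ b)

/-- `σ` is left order preserving from `r` to `le`: for every `s ∈ T^L(σ)`, the partial
map `φ^L_{σ,s}` (sending `x` with `σ(x) ∈ B* x' s` to `x'`) is order preserving from
the (strict version of the) order `r` to the order `le`. -/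
def LeftOrderPreserving {A B : Type*} (σ : A → List B)
    (r : A → A → Prop) (le : B → B → Prop) : Prop :=
  ∀ s : List B, memTL σ s → ∀ x y : A, ∀ x' y' : B, r x y → x ≠ y →
    (∃ u : List B, σ x = u ++ x' :: s) → (∃ u : List B, σ y = u ++ y' :: s) → le x' y'

/-- `p` is the longest common prefix of `u` and `v`. -/
def IsLongestCommonPrefix {B : Type*} (p u v : List B) : Prop :=
  p <+: u ∧ p <+: v ∧ ∀ t : List B, t <+: u → t <+: v → t.length ≤ p.length

/-- `p ∈ T^R(σ)`: `p` is the longest common prefix of `σ(a)w` and `σ(b)w` for some pair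
of distinct letters `a ≠ b`. -/
def memTR {A B : Type*} (σ : A → List B) (w : List B) (p : List B) : Prop :=
  ∃ a b : A, a ≠ b ∧ IsLongestCommonPrefix p (σ a ++ w) (σ b ++ w)

/-- `σ` is right order preserving from `r` to `le`: for every `p ∈ T^R(σ)`, the partial
map `φ^R_{σ,p}` (sending `x` with `σ(x)w ∈ p x' B*` to `x'`) is order preserving from
the (strict version of the) order `r` to the order `le`. -/
def RightOrderPreserving {A B : Type*} (σ : A → List B) (w : List B)
    (r : A → A → Prop) (le : B → B → Prop) : Prop :=
  ∀ p : List B, memTR σ w p → ∀ x y : A, ∀ x' y' : B, r x y → x ≠ y →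
    (∃ u : List B, σ x ++ w = p ++ x' :: u) → (∃ u : List B, σ y ++ w = p ++ y' :: u) →
      le x' y'

/-- `u` is an extended image of `v` under the return morphism `σ` for `w`:
`u = s σ(v) p ∈ L(σ·X)` with `p ∈ w B*` and `E_{X,s,p}(v) ≠ ∅`, i.e. there is a
bi-extension `(a, b)` of `v` with `a ∈ A^L_{σ,s}` and `b ∈ A^R_{σ,p}`. -/
def IsExtendedImage {A B : Type*} (σ : A → List B) (w : List B)
    (X : Set (ℤ → A)) (v : List A) (u : List B) : Prop :=
  ∃ s p : List B, u = s ++ (v.map σ).flatten ++ p ∧ w <+: p ∧ u ∈ imageLang σ X ∧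
    ∃ a b : A, (a :: (v ++ [b])) ∈ lang X ∧
      (∃ t : List B, t ≠ [] ∧ σ a = t ++ s) ∧
      (p <+: σ b ++ w ∧ p ≠ σ b ++ w)

/-!
Since `w` occurs in `σ(a)w` only as a prefix and as a suffix, the occurrences of `w` in `σ(x)w`
are exactly the boundaries between the images of the letters of `x`; together with injectivity
this makes `σ` recognizable: a factorization `σ(x)w = P R` in which `R` begins with `w` comes
from a factorization `x = x₁x₂`. Hence every bi-extension `(c, d)` of an extended image
`s σ(v) p` is `(φ^L_{σ,s}(a), φ^R_{σ,p}(b))` for a bi-extension `(a, b)` of `v`. Conversely, two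
bi-extensions `(a₁, b₁)`, `(a₂, b₂)` of `v` with `a₁ ≠ a₂`, `b₁ ≠ b₂` are carried to two
bi-extensions of `s σ(v) p`, where `s` is the longest common suffix of `σ(a₁), σ(a₂)` and `p`
the longest common prefix of `σ(b₁)w, σ(b₂)w`. As the orders are total and antisymmetric,
order preservation of the partial maps `φ` carries planarity across in both directions.
-/

namespace List

variable {B : Type*}

theorem prefix_append_iff_of_prefix {w t Y : List B} (hY : w <+: Y) :
    w <+: t ++ Y ↔ w <+: t ++ w := by
  have hwY : t ++ w <+: t ++ Y := (List.prefix_append_right_inj t).2 hY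
  refine ⟨fun h => List.prefix_of_prefix_length_le h hwY (by simp), fun h => h.trans hwY⟩

theorem exists_longest {P : List B → Prop} {n : ℕ} (h₀ : P []) (hn : ∀ t, P t → t.length ≤ n) :
    ∃ s, P s ∧ ∀ t, P t → t.length ≤ s.length := by
  classical
  obtain ⟨s, hs, hlen⟩ := Nat.findGreatest_spec (P := fun k => ∃ t, P t ∧ t.length = k)
    (Nat.zero_le n) ⟨[], h₀, rfl⟩
  exact ⟨s, hs, fun t ht => hlen ▸ Nat.le_findGreatest (hn t ht) ⟨t, ht, rfl⟩⟩

end List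

section Lists

variable {B : Type*}

theorem exists_isLongestCommonPrefix (u v : List B) : ∃ p, IsLongestCommonPrefix p u v := by
  obtain ⟨p, ⟨hu, hv⟩, hmax⟩ := List.exists_longest (P := fun t => t <+: u ∧ t <+: v)
    (n := u.length) ⟨List.nil_prefix, List.nil_prefix⟩ fun t ht => ht.1.length_le
  exact ⟨p, hu, hv, fun t htu htv => hmax t ⟨htu, htv⟩⟩

theorem exists_isLongestCommonSuffix (u v : List B) : ∃ s, IsLongestCommonSuffix s u v := by
  obtain ⟨s, ⟨hu, hv⟩, hmax⟩ := List.exists_longest (P := fun t => t <:+ u ∧ t <:+ v)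
    (n := u.length) ⟨List.nil_suffix, List.nil_suffix⟩ fun t ht => ht.1.length_le
  exact ⟨s, hu, hv, fun t htu htv => hmax t ⟨htu, htv⟩⟩

theorem IsLongestCommonPrefix.prefix_of_prefix {p u v t : List B}
    (hp : IsLongestCommonPrefix p u v) (hu : t <+: u) (hv : t <+: v) : t <+: p :=
  List.prefix_of_prefix_length_le hu hp.1 (hp.2.2 t hu hv)

theorem isLongestCommonPrefix_append_cons {p z₁ z₂ : List B} {d₁ d₂ : B} (hd : d₁ ≠ d₂) :
    IsLongestCommonPrefix p (p ++ d₁ :: z₁) (p ++ d₂ :: z₂) := by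
  refine ⟨List.prefix_append _ _, List.prefix_append _ _, fun t h₁ h₂ => ?_⟩
  by_contra! hlen
  have hd₁ : p ++ [d₁] <+: t := List.prefix_of_prefix_length_le ⟨z₁, by simp⟩ h₁ (by simpa)
  have hd₂ : p ++ [d₂] <+: t := List.prefix_of_prefix_length_le ⟨z₂, by simp⟩ h₂ (by simpa)
  simpa [hd] using List.prefix_of_prefix_length_le hd₁ hd₂ (by simp)

theorem isLongestCommonSuffix_append_cons {s t₁ t₂ : List B} {c₁ c₂ : B} (hc : c₁ ≠ c₂) :
    IsLongestCommonSuffix s (t₁ ++ c₁ :: s) (t₂ ++ c₂ :: s) := by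
  refine ⟨⟨t₁ ++ [c₁], by simp⟩, ⟨t₂ ++ [c₂], by simp⟩, fun t h₁ h₂ => ?_⟩
  by_contra! hlen
  have hc₁ : c₁ :: s <:+ t := List.suffix_of_suffix_length_le ⟨t₁, rfl⟩ h₁ (by simpa)
  have hc₂ : c₂ :: s <:+ t := List.suffix_of_suffix_length_le ⟨t₂, rfl⟩ h₂ (by simpa)
  simpa [hc] using (List.suffix_of_suffix_length_le hc₁ hc₂ (by simp)).eq_of_length (by simp)

theorem IsLongestCommonPrefix.exists_cons {p u₁ u₂ : List B} (hp : IsLongestCommonPrefix p u₁ u₂)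
    (h₁ : ¬u₁ <+: u₂) (h₂ : ¬u₂ <+: u₁) :
    ∃ d₁ z₁ d₂ z₂, u₁ = p ++ d₁ :: z₁ ∧ u₂ = p ++ d₂ :: z₂ ∧ d₁ ≠ d₂ := by
  obtain ⟨⟨_ | ⟨d₁, z₁⟩, rfl⟩, ⟨_ | ⟨d₂, z₂⟩, rfl⟩, hmax⟩ := hp
  · simp at h₁
  · simp [List.prefix_append] at h₁
  · simp [List.prefix_append] at h₂
  refine ⟨d₁, z₁, d₂, z₂, rfl, rfl, fun hd => ?_⟩
  subst hd
  simpa using hmax (p ++ [d₁]) ⟨z₁, by simp⟩ ⟨z₂, by simp⟩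

theorem IsLongestCommonSuffix.exists_cons {s u₁ u₂ : List B} (hs : IsLongestCommonSuffix s u₁ u₂)
    (h₁ : ¬u₁ <:+ u₂) (h₂ : ¬u₂ <:+ u₁) :
    ∃ t₁ c₁ t₂ c₂, u₁ = t₁ ++ c₁ :: s ∧ u₂ = t₂ ++ c₂ :: s ∧ c₁ ≠ c₂ := by
  obtain ⟨⟨t₁, rfl⟩, ⟨t₂, rfl⟩, hmax⟩ := hs
  obtain rfl | ⟨t₁, c₁, rfl⟩ := t₁.eq_nil_or_concat
  · exact (h₁ ⟨t₂, rfl⟩).elim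
  obtain rfl | ⟨t₂, c₂, rfl⟩ := t₂.eq_nil_or_concat
  · exact (h₂ ⟨_, rfl⟩).elim
  refine ⟨t₁, c₁, t₂, c₂, by simp, by simp, fun hc => ?_⟩
  subst hc
  simpa using hmax (c₁ :: s) ⟨t₁, by simp⟩ ⟨t₂, by simp⟩

end Lists

section Language

variable {A : Type*} {X : Set (ℤ → A)}

theorem mem_lang_of_infix {u v : List A} (h : u <:+: v) (hv : v ∈ lang X) : u ∈ lang X := by
  obtain ⟨l, r, rfl⟩ := h
  obtain ⟨x, hx, i, hi⟩ := hv
  refine ⟨x, hx, i + l.length, fun k => ?_⟩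
  simpa [add_assoc, List.getElem_append_right] using hi ⟨l.length + k, by simp; omega⟩

theorem exists_append_mem_lang {v : List A} (hv : v ∈ lang X) (n : ℕ) :
    ∃ e : List A, e.length = n ∧ v ++ e ∈ lang X := by
  obtain ⟨x, hx, i, hi⟩ := hv
  refine ⟨List.ofFn fun k : Fin n => x (i + v.length + k), by simp, x, hx, i, fun k => ?_⟩
  by_cases hk : (k : ℕ) < v.length
  · simpa [List.getElem_append_left hk] using hi ⟨k, hk⟩
  · simp [List.getElem_append_right (Nat.le_of_not_lt hk)]
    congr 1
    omega

end Language

namespace IsReturnMorphism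

variable {A B : Type*} {σ : A → List B} {w : List B}

theorem flatten_injective (hσ : IsReturnMorphism σ w) :
    Function.Injective fun v : List A => (v.map σ).flatten :=
  hσ.2.1

theorem prefix_image_append (hσ : IsReturnMorphism σ w) (a : A) : w <+: σ a ++ w :=
  (hσ.2.2 a).2.1

theorem eq_nil_or_eq_nil (hσ : IsReturnMorphism σ w) {a : A} {P Q : List B}
    (h : σ a = P ++ Q) (hQ : w <+: Q ++ w) : P = [] ∨ Q = [] := by
  obtain ⟨hne, hpre, hcard⟩ := hσ.2.2 a
  obtain ⟨i, j, -, hij⟩ := Set.ncard_eq_two.1 hcard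
  have mem : ∀ k, k ≤ (σ a ++ w).length → w <+: (σ a ++ w).drop k → k = i ∨ k = j := by
    intro k hk hw
    have : k ∈ ({i, j} : Set ℕ) := hij ▸ ⟨hk, hw⟩
    simpa using this
  have h₀ := mem 0 (by simp) (by simpa using hpre)
  have hlen := mem (σ a).length (by simp) (by simp)
  have hP := mem P.length (by simp [h]) (by simpa [h] using hQ)
  have hσa : (σ a).length ≠ 0 := by simpa using hne
  have hsum : (σ a).length = P.length + Q.length := by simp [h]
  rw [← List.length_eq_zero_iff, ← List.length_eq_zero_iff]
  omega

theorem prefix_flatten_append (hσ : IsReturnMorphism σ w) (v : List A) :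
    w <+: (v.map σ).flatten ++ w := by
  induction v with
  | nil => simp
  | cons a v ih =>
    simpa [List.prefix_append_iff_of_prefix ih] using hσ.prefix_image_append a

theorem length_le_length_flatten (hσ : IsReturnMorphism σ w) (v : List A) :
    v.length ≤ (v.map σ).flatten.length := by
  induction v with
  | nil => simp
  | cons a v ih =>
    have := List.length_pos_iff.2 (hσ.2.2 a).1
    simp only [List.map_cons, List.flatten_cons, List.length_append, List.length_cons]
    omega

theorem exists_split (hσ : IsReturnMorphism σ w) {v : List A} {P R : List B}
    (h : (v.map σ).flatten ++ w = P ++ R) (hR : w <+: R) :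
    ∃ v₁ v₂, v = v₁ ++ v₂ ∧ (v₁.map σ).flatten = P ∧ (v₂.map σ).flatten ++ w = R := by
  induction v generalizing P with
  | nil =>
    have hlen := congrArg List.length h
    simp only [List.map_nil, List.flatten_nil, List.nil_append, List.length_append] at hlen
    obtain rfl : P = [] := List.length_eq_zero_iff.1 (by have := hR.length_le; omega)
    exact ⟨[], [], by simpa using h⟩
  | cons a v ih =>
    simp only [List.map_cons, List.flatten_cons, List.append_assoc] at h
    obtain ⟨P', rfl, h'⟩ | ⟨Q, hP, rfl⟩ := List.append_eq_append_iff.1 h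
    · obtain ⟨v₁, v₂, rfl, rfl, rfl⟩ := ih h'
      exact ⟨a :: v₁, v₂, by simp⟩
    · have hQ : w <+: Q ++ w := (List.prefix_append_iff_of_prefix (hσ.prefix_flatten_append v)).1 hR
      obtain rfl | rfl := hσ.eq_nil_or_eq_nil hP hQ
      · exact ⟨[], a :: v, by simpa using hP⟩
      · exact ⟨[a], v, by simp [hP]⟩

theorem eq_singleton_of_flatten_eq (hσ : IsReturnMorphism σ w) {v : List A} {a : A}
    (h : (v.map σ).flatten = σ a) : v = [a] :=
  hσ.flatten_injective (by simpa using h)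

theorem eq_of_suffix (hσ : IsReturnMorphism σ w) {a b : A} (h : σ a <:+ σ b) : a = b := by
  obtain ⟨q, hq⟩ := h
  obtain ⟨v₁, v₂, hv, -, h₂⟩ :=
    hσ.exists_split (v := [b]) (P := q) (by simp [← hq]) (hσ.prefix_image_append a)
  obtain rfl := hσ.eq_singleton_of_flatten_eq (List.append_cancel_right h₂)
  simpa [eq_comm] using congrArg List.getLast? hv

theorem eq_of_append_prefix (hσ : IsReturnMorphism σ w) {a b : A} (h : σ a ++ w <+: σ b ++ w) :
    a = b := by
  obtain ⟨z, hz⟩ := h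
  obtain ⟨v₁, v₂, hv, h₁, -⟩ :=
    hσ.exists_split (v := [b]) (P := σ a) (R := w ++ z) (by simp [← hz]) (List.prefix_append w z)
  obtain rfl := hσ.eq_singleton_of_flatten_eq h₁
  simpa [eq_comm] using congrArg List.head? hv

theorem exists_eq_append_cons (hσ : IsReturnMorphism σ w) {a a' : A} {t' s l m : List B} {c : B}
    (ht' : t' ≠ []) (hs : σ a' = t' ++ s) (h : l ++ σ a = m ++ c :: s) :
    ∃ t, σ a = t ++ c :: s := by
  have ha : σ a <:+ m ++ c :: s := h ▸ List.suffix_append l (σ a)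
  by_cases hlen : (c :: s).length ≤ (σ a).length
  · obtain ⟨t, ht⟩ := List.suffix_of_suffix_length_le (List.suffix_append m _) ha hlen
    exact ⟨t, ht.symm⟩
  · have has : σ a <:+ s := List.suffix_of_suffix_length_le ha
      ((List.suffix_cons c s).trans (List.suffix_append m _)) (by simp at hlen; omega)
    obtain rfl := hσ.eq_of_suffix (has.trans (hs ▸ List.suffix_append t' s))
    have hlen' := congrArg List.length hs
    rw [List.length_append] at hlen'
    have := List.length_pos_iff.2 ht'
    have := has.length_le
    omega

theorem exists_append_eq_append_cons (hσ : IsReturnMorphism σ w) {b b' : A} {p Y m : List B}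
    {d : B} (hp : p <+: σ b' ++ w) (hp' : p ≠ σ b' ++ w) (hY : w <+: Y)
    (h : σ b ++ Y = p ++ d :: m) : ∃ z, σ b ++ w = p ++ d :: z := by
  have hbw : σ b ++ w <+: p ++ d :: m := h ▸ (List.prefix_append_right_inj _).2 hY
  have hpd : p ++ [d] <+: p ++ d :: m := ⟨m, by simp⟩
  by_cases hlen : (p ++ [d]).length ≤ (σ b ++ w).length
  · obtain ⟨z, hz⟩ := List.prefix_of_prefix_length_le hpd hbw hlen
    exact ⟨z, by simp [← hz]⟩
  · have hbp : σ b ++ w <+: p :=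
      List.prefix_of_prefix_length_le hbw (List.prefix_append _ _) (by simp at hlen ⊢; omega)
    obtain rfl := hσ.eq_of_append_prefix (hbp.trans hp)
    exact absurd (hp.eq_of_length (le_antisymm hp.length_le hbp.length_le)) hp'

theorem exists_biextension (hσ : IsReturnMorphism σ w) {X : Set (ℤ → A)} {v : List A}
    {s p t' : List B} {a' b' : A} (ht' : t' ≠ []) (hs : σ a' = t' ++ s) (hwp : w <+: p)
    (hp : p <+: σ b' ++ w) (hp' : p ≠ σ b' ++ w) {c d : B}
    (h : c :: (s ++ (v.map σ).flatten ++ p ++ [d]) ∈ imageLang σ X) :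
    ∃ a b, a :: (v ++ [b]) ∈ lang X ∧ (∃ t, σ a = t ++ c :: s) ∧
      ∃ z, σ b ++ w = p ++ d :: z := by
  obtain ⟨v₀, hv₀, pre, suf, hv₀_eq⟩ := h
  have hwR : w <+: p ++ d :: (suf ++ w) := hwp.trans (List.prefix_append _ _)
  obtain ⟨x₁, x₂, rfl, hx₁, hx₂⟩ := hσ.exists_split (P := pre ++ c :: s)
    (by rw [← hv₀_eq]; simp) ((List.prefix_append_iff_of_prefix hwR).2 (hσ.prefix_flatten_append v))
  obtain ⟨v', x₃, rfl, hv', hx₃⟩ := hσ.exists_split hx₂ hwR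
  obtain rfl := hσ.flatten_injective hv'
  obtain rfl | ⟨x₀, a, rfl⟩ := x₁.eq_nil_or_concat
  · simp at hx₁
  rcases x₃ with _ | ⟨b, x₄⟩
  · have := congrArg List.length hx₃
    simp at this
    omega
  refine ⟨a, b, mem_lang_of_infix ⟨x₀, x₄, by simp⟩ hv₀,
    hσ.exists_eq_append_cons ht' hs (by simpa using hx₁),
    hσ.exists_append_eq_append_cons hp hp' (hσ.prefix_flatten_append x₄) (by simpa using hx₃)⟩

theorem mem_imageLang (hσ : IsReturnMorphism σ w) {X : Set (ℤ → A)} {v : List A} {a b : A}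
    {t q r : List B} (hm : a :: (v ++ [b]) ∈ lang X) (ht : σ a = t ++ q) (hr : r <+: σ b ++ w) :
    q ++ (v.map σ).flatten ++ r ∈ imageLang σ X := by
  -- the image of `|w|` more letters begins with `w`, so it extends `r` within the image of a word
  obtain ⟨e, he, hme⟩ := exists_append_mem_lang hm w.length
  have hwe : w <+: (e.map σ).flatten := List.prefix_of_prefix_length_le
    (hσ.prefix_flatten_append e) (List.prefix_append _ _) (he ▸ hσ.length_le_length_flatten e)
  obtain ⟨z, hz⟩ := hr.trans ((List.prefix_append_right_inj _).2 hwe)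
  exact ⟨_, hme, t, z, by simp [ht, ← hz]⟩

end IsReturnMorphism

section OrderPreserving

variable {A B : Type*} {σ : A → List B} {w : List B} {rA : A → A → Prop} {rB : B → B → Prop}

theorem ne_of_eq_append_cons {a₁ a₂ : A} {t₁ t₂ s : List B} {c₁ c₂ : B}
    (h₁ : σ a₁ = t₁ ++ c₁ :: s) (h₂ : σ a₂ = t₂ ++ c₂ :: s) (hc : c₁ ≠ c₂) : a₁ ≠ a₂ := by
  rintro rfl
  simpa [hc] using (List.append_inj' (h₁.symm.trans h₂) (by simp)).2

theorem ne_of_append_eq_append_cons {b₁ b₂ : A} {p z₁ z₂ : List B} {d₁ d₂ : B}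
    (h₁ : σ b₁ ++ w = p ++ d₁ :: z₁) (h₂ : σ b₂ ++ w = p ++ d₂ :: z₂) (hd : d₁ ≠ d₂) :
    b₁ ≠ b₂ := by
  rintro rfl
  simpa [hd] using List.append_cancel_left (h₁.symm.trans h₂)

theorem LeftOrderPreserving.map_rel (hL : LeftOrderPreserving σ rA rB) {a₁ a₂ : A}
    {t₁ t₂ s : List B} {c₁ c₂ : B} (hr : rA a₁ a₂) (h₁ : σ a₁ = t₁ ++ c₁ :: s)
    (h₂ : σ a₂ = t₂ ++ c₂ :: s) (hc : c₁ ≠ c₂) : rB c₁ c₂ :=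
  have ha := ne_of_eq_append_cons h₁ h₂ hc
  hL s ⟨a₁, a₂, ha, h₁ ▸ h₂ ▸ isLongestCommonSuffix_append_cons hc⟩ a₁ a₂ c₁ c₂ hr ha
    ⟨t₁, h₁⟩ ⟨t₂, h₂⟩

theorem RightOrderPreserving.map_rel (hR : RightOrderPreserving σ w rA rB) {b₁ b₂ : A}
    {p z₁ z₂ : List B} {d₁ d₂ : B} (hr : rA b₁ b₂) (h₁ : σ b₁ ++ w = p ++ d₁ :: z₁)
    (h₂ : σ b₂ ++ w = p ++ d₂ :: z₂) (hd : d₁ ≠ d₂) : rB d₁ d₂ :=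
  have hb := ne_of_append_eq_append_cons h₁ h₂ hd
  hR p ⟨b₁, b₂, hb, h₁ ▸ h₂ ▸ isLongestCommonPrefix_append_cons hd⟩ b₁ b₂ d₁ d₂ hr hb
    ⟨z₁, h₁⟩ ⟨z₂, h₂⟩

theorem LeftOrderPreserving.rel_of_map_rel [Std.Total rA] [Std.Antisymm rB]
    (hL : LeftOrderPreserving σ rA rB) {a₁ a₂ : A} {t₁ t₂ s : List B} {c₁ c₂ : B}
    (h₁ : σ a₁ = t₁ ++ c₁ :: s) (h₂ : σ a₂ = t₂ ++ c₂ :: s) (hc : c₁ ≠ c₂) (hle : rB c₁ c₂) :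
    rA a₁ a₂ :=
  (total_of rA a₁ a₂).resolve_right fun h => hc (antisymm hle (hL.map_rel h h₂ h₁ hc.symm))

theorem RightOrderPreserving.rel_of_map_rel [Std.Total rA] [Std.Antisymm rB]
    (hR : RightOrderPreserving σ w rA rB) {b₁ b₂ : A} {p z₁ z₂ : List B} {d₁ d₂ : B}
    (h₁ : σ b₁ ++ w = p ++ d₁ :: z₁) (h₂ : σ b₂ ++ w = p ++ d₂ :: z₂) (hd : d₁ ≠ d₂)
    (hle : rB d₁ d₂) : rA b₁ b₂ :=
  (total_of rA b₁ b₂).resolve_right fun h => hd (antisymm hle (hR.map_rel h h₂ h₁ hd.symm))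

end OrderPreserving

section Planarity

variable {A B : Type*} {σ : A → List B} {w : List B} {X : Set (ℤ → A)} {v : List A}
  {rL rR : A → A → Prop} {leL leR : B → B → Prop}

theorem PlanarWord.imageLang_of_isExtendedImage [Std.Total rL] [Std.Antisymm leL] [Std.Refl leR]
    (hσ : IsReturnMorphism σ w) (hL : LeftOrderPreserving σ rL leL)
    (hR : RightOrderPreserving σ w rR leR) (hv : PlanarWord (lang X) rL rR v) {u : List B}
    (hu : IsExtendedImage σ w X v u) : PlanarWord (imageLang σ X) leL leR u := by
  obtain ⟨s, p, rfl, hwp, -, a', b', -, ⟨t', ht', hs⟩, hp, hp'⟩ := hu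
  intro c₁ d₁ c₂ d₂ hm₁ hm₂ hle hc
  obtain ⟨a₁, b₁, hv₁, ⟨t₁, ha₁⟩, z₁, hb₁⟩ := hσ.exists_biextension ht' hs hwp hp hp' hm₁
  obtain ⟨a₂, b₂, hv₂, ⟨t₂, ha₂⟩, z₂, hb₂⟩ := hσ.exists_biextension ht' hs hwp hp hp' hm₂
  by_cases hd : d₁ = d₂
  · exact hd ▸ refl_of leR d₁
  have hr := hv a₁ b₁ a₂ b₂ hv₁ hv₂ (hL.rel_of_map_rel ha₁ ha₂ hc hle)
    (ne_of_eq_append_cons ha₁ ha₂ hc)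
  exact hR.map_rel hr hb₁ hb₂ hd

theorem PlanarWord.of_forall_isExtendedImage [Std.Refl rR] [Std.Total rR] [Std.Antisymm leR]
    (hσ : IsReturnMorphism σ w) (hL : LeftOrderPreserving σ rL leL)
    (hR : RightOrderPreserving σ w rR leR)
    (h : ∀ u, IsExtendedImage σ w X v u → PlanarWord (imageLang σ X) leL leR u) :
    PlanarWord (lang X) rL rR v := by
  intro a₁ b₁ a₂ b₂ hm₁ hm₂ hr ha
  by_cases hb : b₁ = b₂
  · exact hb ▸ refl_of rR b₁
  obtain ⟨s, hs⟩ := exists_isLongestCommonSuffix (σ a₁) (σ a₂)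
  obtain ⟨t₁, c₁, t₂, c₂, ha₁, ha₂, hc⟩ :=
    hs.exists_cons (fun h => ha (hσ.eq_of_suffix h)) (fun h => ha (hσ.eq_of_suffix h).symm)
  obtain ⟨p, hp⟩ := exists_isLongestCommonPrefix (σ b₁ ++ w) (σ b₂ ++ w)
  obtain ⟨d₁, z₁, d₂, z₂, hb₁, hb₂, hd⟩ := hp.exists_cons
    (fun h => hb (hσ.eq_of_append_prefix h)) (fun h => hb (hσ.eq_of_append_prefix h).symm)
  have hu : IsExtendedImage σ w X v (s ++ (v.map σ).flatten ++ p) :=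
    ⟨s, p, rfl, hp.prefix_of_prefix (hσ.prefix_image_append b₁) (hσ.prefix_image_append b₂),
      hσ.mem_imageLang hm₁ (t := t₁ ++ [c₁]) (by simp [ha₁]) hp.1,
      a₁, b₁, hm₁, ⟨t₁ ++ [c₁], by simp, by simp [ha₁]⟩, hp.1, by simp [hb₁]⟩
  have hbi : ∀ {a b c d t z}, a :: (v ++ [b]) ∈ lang X → σ a = t ++ c :: s →
      σ b ++ w = p ++ d :: z → c :: (s ++ (v.map σ).flatten ++ p ++ [d]) ∈ imageLang σ X :=
    fun {_ _ _ d _ z} hm ha hb => by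
      simpa using hσ.mem_imageLang hm ha (r := p ++ [d]) ⟨z, by simp [hb]⟩
  exact hR.rel_of_map_rel hb₁ hb₂ hd
    (h _ hu c₁ d₁ c₂ d₂ (hbi hm₁ ha₁ hb₁) (hbi hm₂ ha₂ hb₂) (hL.map_rel hr ha₁ ha₂ hc) hc)

end Planarity

theorem stmt_17_general {A B : Type*}
    (σ : A → List B) (w : List B) (hret : IsReturnMorphism σ w)
    (rL rR : A → A → Prop) (leL leR : B → B → Prop)
    (hrL : IsLinearOrder A rL) (hrR : IsLinearOrder A rR)
    (hleL : IsLinearOrder B leL) (hleR : IsLinearOrder B leR)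
    (hL : LeftOrderPreserving σ rL leL) (hR : RightOrderPreserving σ w rR leR)
    (X : Set (ℤ → A)) (v : List A) :
    PlanarWord (lang X) rL rR v ↔
      ∀ u : List B, IsExtendedImage σ w X v u →
        PlanarWord (imageLang σ X) leL leR u :=
  ⟨fun hv _ => hv.imageLang_of_isExtendedImage hret hL hR,
    PlanarWord.of_forall_isExtendedImage hret hL hR⟩

/-- Let `σ` be a return morphism that is planar preserving from `(⪯L, ⪯R)` to
`(≤L, ≤R)`. Then a word `v ∈ L(X)` is planar for `(⪯L, ⪯R)` if and only if every
extended image of `v` under `σ` is planar for `(≤L, ≤R)`. -/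
theorem stmt_17 {A B : Type*} [TopologicalSpace A] [DiscreteTopology A]
    (σ : A → List B) (w : List B) (hret : IsReturnMorphism σ w)
    (rL rR : A → A → Prop) (leL leR : B → B → Prop)
    (hrL : IsLinearOrder A rL) (hrR : IsLinearOrder A rR)
    (hleL : IsLinearOrder B leL) (hleR : IsLinearOrder B leR)
    (hL : LeftOrderPreserving σ rL leL) (hR : RightOrderPreserving σ w rR leR)
    (X : Set (ℤ → A)) (hX : IsShiftSpace X) (v : List A) (hv : v ∈ lang X) :
    PlanarWord (lang X) rL rR v ↔
      ∀ u : List B, IsExtendedImage σ w X v u →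
        PlanarWord (imageLang σ X) leL leR u :=
  stmt_17_general σ w hret rL rR leL leR hrL hrR hleL hleR hL hR X v
end
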